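/- arXiv:0904.1830 — 5 statements merged into one kernel-verified Lean document; each statement's English description precedes it below -/
import Mathlib

section
/- Let F1 and F2 be m×m positive definite real symmetric matrices. Then det(I + F1)^{-1} · det(I + F2)^{-1} / det(I - (I + F1)^{-1} F1 F2 (I + F2)^{-1}) = det(I + F1 + F2)^{-1}. -/
theorem stmt_1 {m : ℕ} (F1 F2 : Matrix (Fin m) (Fin m) ℝ)
    (h1 : F1.PosDef) (h2 : F2.PosDef) :
    (1 + F1).det⁻¹ * (1 + F2).det⁻¹ /
      (1 - (1 + F1)⁻¹ * F1 * F2 * (1 + F2)⁻¹).det = (1 + F1 + F2).det⁻¹ := by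
  have hA : (1 + F1).PosDef := Matrix.PosDef.one.add h1
  have hB : (1 + F2).PosDef := Matrix.PosDef.one.add h2
  have hC : (1 + F1 + F2).PosDef := hA.add h2
  have hAd : (1 + F1).det ≠ 0 := hA.det_pos.ne'
  have hBd : (1 + F2).det ≠ 0 := hB.det_pos.ne'
  have hCd : (1 + F1 + F2).det ≠ 0 := hC.det_pos.ne'
  have hAu : IsUnit (1 + F1).det := hAd.isUnit
  have hBu : IsUnit (1 + F2).det := hBd.isUnit
  have key : (1 + F1) * (1 - (1 + F1)⁻¹ * F1 * F2 * (1 + F2)⁻¹) * (1 + F2)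
      = 1 + F1 + F2 := by
    have hAi : (1 + F1) * (1 + F1)⁻¹ = 1 := Matrix.mul_nonsing_inv _ hAu
    have hBi : (1 + F2)⁻¹ * (1 + F2) = 1 := Matrix.nonsing_inv_mul _ hBu
    calc (1 + F1) * (1 - (1 + F1)⁻¹ * F1 * F2 * (1 + F2)⁻¹) * (1 + F2)
        = (1 + F1) * (1 + F2) -
          ((1 + F1) * (1 + F1)⁻¹) * (F1 * F2 * ((1 + F2)⁻¹ * (1 + F2))) := by
          noncomm_ring
      _ = 1 + F1 + F2 := by rw [hAi, hBi]; noncomm_ring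
  have hdet : (1 + F1).det * (1 - (1 + F1)⁻¹ * F1 * F2 * (1 + F2)⁻¹).det * (1 + F2).det
      = (1 + F1 + F2).det := by
    rw [← Matrix.det_mul, ← Matrix.det_mul, key]
  have hMd : (1 - (1 + F1)⁻¹ * F1 * F2 * (1 + F2)⁻¹).det ≠ 0 := by
    intro h
    rw [h] at hdet
    simp at hdet
    exact hCd hdet.symm
  rw [← hdet, mul_inv, mul_inv, div_eq_mul_inv]
  ring
end

section
/- For real numbers a, b, c > 0, the double integral over (0,1)×(0,1) of u1^{a-1} u2^{b-1} (1-u1)^{b+c-1} (1-u2)^{a+c-1} (1 - u1·u2)^{-(a+b+c)} du1 du2 equals Γ(a)Γ(b)Γ(c)/Γ(a+b+c). -/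
/-!
Integrate in `u2` first. For fixed `x = u1 < 1`, the substitution `t = v / (1 - x + x v)` maps
`(0, 1)` onto itself and turns `∫ t^(p-1) (1-t)^(q-1) (1 - x t)^(-(p+q)) dt` into
`(1 - x)^(-p) B(p, q)`. With `p = b`, `q = a + c` the inner integral is
`B(b, a + c) u1^(a-1) (1 - u1)^(c-1)`, the outer one is then `B(b, a + c) B(a, c)`, and the
factors `Γ(a + c)` cancel.
-/

open MeasureTheory Set

theorem integral_rpow_mul_one_sub_rpow {p q : ℝ} (hp : 0 < p) (hq : 0 < q) :
    ∫ x in Ioo (0 : ℝ) 1, x ^ (p - 1) * (1 - x) ^ (q - 1) =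
      Real.Gamma p * Real.Gamma q / Real.Gamma (p + q) := by
  have h := Complex.betaIntegral_eq_Gamma_mul_div p q (by simpa) (by simpa)
  rw [Complex.betaIntegral, intervalIntegral.integral_of_le zero_le_one,
    integral_Ioc_eq_integral_Ioo, ← Complex.ofReal_add, Complex.Gamma_ofReal,
    Complex.Gamma_ofReal, Complex.Gamma_ofReal] at h
  rw [← Complex.ofReal_inj, Complex.ofReal_div, Complex.ofReal_mul, ← h, ← integral_complex_ofReal]
  refine setIntegral_congr_fun measurableSet_Ioo fun x ⟨hx0, hx1⟩ ↦ ?_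
  push_cast
  rw [Complex.ofReal_cpow hx0.le, Complex.ofReal_cpow (sub_nonneg.2 hx1.le)]
  push_cast
  rfl

section Substitution

variable {x : ℝ}

lemma one_sub_add_mul_pos (hx : x < 1) {v : ℝ} (hv : v ∈ Ioo (0 : ℝ) 1) : 0 < 1 - x + x * v := by
  nlinarith [hv.1, hv.2]

lemma hasDerivAt_div_one_sub_add_mul {v : ℝ} (hv : 1 - x + x * v ≠ 0) :
    HasDerivAt (fun v ↦ v / (1 - x + x * v)) ((1 - x) / (1 - x + x * v) ^ 2) v :=
  ((hasDerivAt_id' v).fun_div (((hasDerivAt_id' v).const_mul x).const_add (1 - x)) hv).congr_deriv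
    (by ring)

lemma injOn_div_one_sub_add_mul (hx : x < 1) :
    InjOn (fun v ↦ v / (1 - x + x * v)) (Ioo 0 1) := by
  intro v hv w hw h
  have hv' := one_sub_add_mul_pos hx hv
  have hw' := one_sub_add_mul_pos hx hw
  rw [div_eq_div_iff hv'.ne' hw'.ne'] at h
  nlinarith

lemma image_div_one_sub_add_mul_Ioo (hx : x < 1) :
    (fun v ↦ v / (1 - x + x * v)) '' Ioo 0 1 = Ioo 0 1 := by
  ext t
  constructor
  · rintro ⟨v, hv, rfl⟩
    have hD := one_sub_add_mul_pos hx hv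
    exact ⟨div_pos hv.1 hD, (div_lt_one hD).2 (by nlinarith [hv.1, hv.2])⟩
  · rintro ⟨ht0, ht1⟩
    have hxt : 0 < 1 - x * t := by nlinarith
    refine ⟨t * (1 - x) / (1 - x * t), ⟨div_pos (mul_pos ht0 (sub_pos.2 hx)) hxt, ?_⟩, ?_⟩
    · rw [div_lt_one hxt]; nlinarith
    · have hD : 1 - x + x * (t * (1 - x) / (1 - x * t)) = (1 - x) / (1 - x * t) := by
        field_simp
        ring
      have h1x : 1 - x ≠ 0 := (sub_pos.2 hx).ne'
      change t * (1 - x) / (1 - x * t) / (1 - x + x * (t * (1 - x) / (1 - x * t))) = t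
      rw [hD, div_div_div_cancel_right₀ hxt.ne', mul_div_assoc, div_self h1x, mul_one]

lemma abs_deriv_mul_integrand_div_one_sub_add_mul (hx : x < 1) (p q : ℝ) {v : ℝ}
    (hv : v ∈ Ioo (0 : ℝ) 1) :
    |(1 - x) / (1 - x + x * v) ^ 2| *
        ((v / (1 - x + x * v)) ^ (p - 1) * (1 - v / (1 - x + x * v)) ^ (q - 1) *
          (1 - x * (v / (1 - x + x * v))) ^ (-(p + q))) =
      (1 - x) ^ (-p) * (v ^ (p - 1) * (1 - v) ^ (q - 1)) := by
  obtain ⟨hv0, hv1⟩ := hv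
  have hD := one_sub_add_mul_pos hx ⟨hv0, hv1⟩
  have h1x : 0 < 1 - x := sub_pos.2 hx
  have h1v : 0 < 1 - v := sub_pos.2 hv1
  have hφ : 1 - v / (1 - x + x * v) = (1 - x) * (1 - v) / (1 - x + x * v) := by
    rw [one_sub_div hD.ne']
    ring
  have hxφ : 1 - x * (v / (1 - x + x * v)) = (1 - x) / (1 - x + x * v) := by
    rw [← mul_div_assoc, one_sub_div hD.ne']
    ring
  rw [hφ, hxφ, abs_of_pos (by positivity), Real.div_rpow hv0.le hD.le,
    Real.div_rpow (by positivity) hD.le, Real.div_rpow h1x.le hD.le, Real.mul_rpow h1x.le h1v.le]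
  generalize 1 - x + x * v = D at hD ⊢
  generalize 1 - x = y at h1x ⊢
  have hy : y * y ^ (q - 1) * y ^ (-(p + q)) = y ^ (-p) := by
    rw [mul_comm y, ← Real.rpow_add_one h1x.ne', ← Real.rpow_add h1x]
    ring_nf
  have hDpow : D ^ 2 * D ^ (p - 1) * D ^ (q - 1) * D ^ (-(p + q)) = 1 := by
    rw [← Real.rpow_two, ← Real.rpow_add hD, ← Real.rpow_add hD, ← Real.rpow_add hD]
    ring_nf
    exact Real.rpow_zero D
  calc _ = y * y ^ (q - 1) * y ^ (-(p + q)) * (v ^ (p - 1) * (1 - v) ^ (q - 1)) /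
        (D ^ 2 * D ^ (p - 1) * D ^ (q - 1) * D ^ (-(p + q))) := by ring
    _ = _ := by rw [hy, hDpow, div_one]

theorem integral_rpow_mul_one_sub_rpow_mul_one_sub_mul_rpow (hx : x < 1) (p q : ℝ) :
    ∫ t in Ioo (0 : ℝ) 1, t ^ (p - 1) * (1 - t) ^ (q - 1) * (1 - x * t) ^ (-(p + q)) =
      (1 - x) ^ (-p) * ∫ t in Ioo (0 : ℝ) 1, t ^ (p - 1) * (1 - t) ^ (q - 1) := by
  have h := integral_image_eq_integral_abs_deriv_smul measurableSet_Ioo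
    (fun v hv ↦ (hasDerivAt_div_one_sub_add_mul (one_sub_add_mul_pos hx hv).ne').hasDerivWithinAt)
    (injOn_div_one_sub_add_mul hx)
    (fun t ↦ t ^ (p - 1) * (1 - t) ^ (q - 1) * (1 - x * t) ^ (-(p + q)))
  rw [image_div_one_sub_add_mul_Ioo hx] at h
  rw [h, ← integral_const_mul]
  exact setIntegral_congr_fun measurableSet_Ioo fun v hv ↦
    abs_deriv_mul_integrand_div_one_sub_add_mul hx p q hv

end Substitution

theorem stmt_6 (a b c : ℝ) (ha : 0 < a) (hb : 0 < b) (hc : 0 < c) :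
    ∫ u1 in Set.Ioo (0 : ℝ) 1, ∫ u2 in Set.Ioo (0 : ℝ) 1,
        u1 ^ (a - 1) * u2 ^ (b - 1) * (1 - u1) ^ (b + c - 1) * (1 - u2) ^ (a + c - 1) *
          (1 - u1 * u2) ^ (-(a + b + c)) =
      Real.Gamma a * Real.Gamma b * Real.Gamma c / Real.Gamma (a + b + c) := by
  have hinner : ∀ u1 ∈ Ioo (0 : ℝ) 1,
      ∫ u2 in Ioo (0 : ℝ) 1,
        u1 ^ (a - 1) * u2 ^ (b - 1) * (1 - u1) ^ (b + c - 1) * (1 - u2) ^ (a + c - 1) *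
          (1 - u1 * u2) ^ (-(a + b + c)) =
      Real.Gamma b * Real.Gamma (a + c) / Real.Gamma (a + b + c) *
        (u1 ^ (a - 1) * (1 - u1) ^ (c - 1)) := by
    rintro u1 ⟨-, h1⟩
    have h := integral_rpow_mul_one_sub_rpow_mul_one_sub_mul_rpow h1 b (a + c)
    rw [integral_rpow_mul_one_sub_rpow hb (by positivity), show b + (a + c) = a + b + c by ring]
      at h
    have hpow : (1 - u1) ^ (b + c - 1) * (1 - u1) ^ (-b) = (1 - u1) ^ (c - 1) := by
      rw [← Real.rpow_add (sub_pos.2 h1)]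
      ring_nf
    calc _ = u1 ^ (a - 1) * (1 - u1) ^ (b + c - 1) * ∫ u2 in Ioo (0 : ℝ) 1,
          u2 ^ (b - 1) * (1 - u2) ^ (a + c - 1) * (1 - u1 * u2) ^ (-(a + b + c)) := by
          rw [← integral_const_mul]
          congr with u2
          ring
      _ = _ := by
          rw [h, ← hpow]
          ring
  rw [setIntegral_congr_fun measurableSet_Ioo hinner, integral_const_mul,
    integral_rpow_mul_one_sub_rpow ha hc]
  have hac := (Real.Gamma_pos_of_pos (add_pos ha hc)).ne'
  field_simp
end

section
/- Let a, b, c > 0 and let (U1, U2) have the bivariate generalised beta type I density p(u1,u2) = u1^{a-1} u2^{b-1} (1-u1)^{b+c-1} (1-u2)^{a+c-1} (1-u1 u2)^{-(a+b+c)} · Γ(a+b+c)/(Γ(a)Γ(b)Γ(c)) on (0,1)². Then the marginal density of U1 is the Beta(a, c) density u1^{a-1}(1-u1)^{c-1}/B(a,c). -/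
/-!
Up to factors depending on `u₁` only, the density is the integrand of
`∫₀¹ t ^ (p - 1) (1 - t) ^ (q - 1) (1 - x t) ^ (-(p + q)) dt` with `x = u₁`, `p = b`,
`q = a + c`. The substitution `t ↦ (1 - t) / (1 - x t)`, an involution of `(0, 1)`, makes all
powers of `1 - x t` cancel and turns this integral into `(1 - x) ^ (-p) B(p, q)`; the Gamma
factors then collapse to `1 / B(a, c)`.
-/

open MeasureTheory Set ProbabilityTheory

theorem integral_Ioo_rpow_mul_one_sub_rpow {p q : ℝ} (hp : 0 < p) (hq : 0 < q) :
    ∫ t in Ioo (0 : ℝ) 1, t ^ (p - 1) * (1 - t) ^ (q - 1) = beta p q := by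
  have hcast : Complex.betaIntegral p q =
      ((∫ t in (0 : ℝ)..1, t ^ (p - 1) * (1 - t) ^ (q - 1) : ℝ) : ℂ) := by
    rw [Complex.betaIntegral, ← intervalIntegral.integral_ofReal]
    refine intervalIntegral.integral_congr fun t ht => ?_
    rw [uIcc_of_le zero_le_one] at ht
    push_cast
    rw [Complex.ofReal_cpow ht.1, Complex.ofReal_cpow (sub_nonneg.2 ht.2)]
    push_cast
    ring
  rw [beta_eq_betaIntegralReal p q hp hq, hcast, Complex.ofReal_re,
    intervalIntegral.integral_of_le zero_le_one, integral_Ioc_eq_integral_Ioo]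

section PfaffSubstitution

variable {x s : ℝ}

noncomputable def pfaffMap (x s : ℝ) : ℝ := (1 - s) / (1 - x * s)

lemma one_sub_mul_pos_of_mem_Ioo (hx : x < 1) (hs : s ∈ Ioo (0 : ℝ) 1) : 0 < 1 - x * s := by
  nlinarith [mul_pos hs.1 (sub_pos.2 hx), hs.2]

lemma one_sub_pfaffMap (hs : 1 - x * s ≠ 0) :
    1 - pfaffMap x s = s * (1 - x) / (1 - x * s) := by
  rw [pfaffMap, eq_div_iff hs, sub_mul, div_mul_cancel₀ _ hs]
  ring

lemma one_sub_mul_pfaffMap (hs : 1 - x * s ≠ 0) :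
    1 - x * pfaffMap x s = (1 - x) / (1 - x * s) := by
  rw [pfaffMap, eq_div_iff hs, sub_mul, mul_assoc, div_mul_cancel₀ _ hs]
  ring

lemma pfaffMap_mem_Ioo (hx : x < 1) (hs : s ∈ Ioo (0 : ℝ) 1) :
    pfaffMap x s ∈ Ioo (0 : ℝ) 1 := by
  have hden := one_sub_mul_pos_of_mem_Ioo hx hs
  refine ⟨div_pos (sub_pos.2 hs.2) hden, (div_lt_one hden).2 ?_⟩
  nlinarith [hs.1]

lemma pfaffMap_pfaffMap (hx : x < 1) (hs : 1 - x * s ≠ 0) : pfaffMap x (pfaffMap x s) = s := by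
  have h1x : 1 - x ≠ 0 := (sub_pos.2 hx).ne'
  rw [pfaffMap, one_sub_pfaffMap hs, one_sub_mul_pfaffMap hs, div_div_div_cancel_right₀ hs,
    mul_div_cancel_right₀ s h1x]

lemma injOn_pfaffMap (hx : x < 1) : InjOn (pfaffMap x) (Ioo 0 1) := fun s hs t ht hst => by
  rw [← pfaffMap_pfaffMap hx (one_sub_mul_pos_of_mem_Ioo hx hs).ne',
    ← pfaffMap_pfaffMap hx (one_sub_mul_pos_of_mem_Ioo hx ht).ne', hst]

lemma image_pfaffMap_Ioo (hx : x < 1) : pfaffMap x '' Ioo 0 1 = Ioo 0 1 := by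
  refine Subset.antisymm (image_subset_iff.2 fun s hs => pfaffMap_mem_Ioo hx hs) fun t ht => ?_
  exact ⟨pfaffMap x t, pfaffMap_mem_Ioo hx ht,
    pfaffMap_pfaffMap hx (one_sub_mul_pos_of_mem_Ioo hx ht).ne'⟩

lemma hasDerivAt_pfaffMap (hs : 1 - x * s ≠ 0) :
    HasDerivAt (pfaffMap x) ((x - 1) / (1 - x * s) ^ 2) s := by
  have := ((hasDerivAt_id s).const_sub 1).div (((hasDerivAt_id s).const_mul x).const_sub 1) hs
  exact this.congr_deriv (by simp only [id]; ring)

theorem integral_Ioo_eq_integral_Ioo_pfaffMap (hx : x < 1) (g : ℝ → ℝ) :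
    ∫ t in Ioo (0 : ℝ) 1, g t =
      ∫ s in Ioo (0 : ℝ) 1, (1 - x) / (1 - x * s) ^ 2 * g (pfaffMap x s) := by
  have hderiv : ∀ s ∈ Ioo (0 : ℝ) 1,
      HasDerivWithinAt (pfaffMap x) ((x - 1) / (1 - x * s) ^ 2) (Ioo 0 1) s := fun s hs =>
    (hasDerivAt_pfaffMap (one_sub_mul_pos_of_mem_Ioo hx hs).ne').hasDerivWithinAt
  conv_lhs => rw [← image_pfaffMap_Ioo hx]
  rw [integral_image_eq_integral_abs_deriv_smul measurableSet_Ioo hderiv (injOn_pfaffMap hx)]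
  refine setIntegral_congr_fun measurableSet_Ioo fun s hs => ?_
  rw [smul_eq_mul, abs_div, abs_of_neg (sub_neg.2 hx), neg_sub,
    abs_of_pos (pow_pos (one_sub_mul_pos_of_mem_Ioo hx hs) 2)]

lemma pfaffMap_integrand_eq (hx : x < 1) (hs : s ∈ Ioo (0 : ℝ) 1) (p q : ℝ) :
    (1 - x) / (1 - x * s) ^ 2 * (pfaffMap x s ^ (p - 1) * (1 - pfaffMap x s) ^ (q - 1) *
        (1 - x * pfaffMap x s) ^ (-(p + q))) =
      (1 - x) ^ (-p) * (s ^ (q - 1) * (1 - s) ^ (p - 1)) := by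
  have hA : 0 < 1 - x := sub_pos.2 hx
  have hB := one_sub_mul_pos_of_mem_Ioo hx hs
  have hs' : 0 < 1 - s := sub_pos.2 hs.2
  rw [one_sub_pfaffMap hB.ne', one_sub_mul_pfaffMap hB.ne', pfaffMap,
    Real.div_rpow hs'.le hB.le, Real.div_rpow (mul_pos hs.1 hA).le hB.le, Real.div_rpow hA.le hB.le,
    Real.mul_rpow hs.1.le hA.le]
  simp only [Real.rpow_sub_one hA.ne', Real.rpow_sub_one hB.ne', Real.rpow_neg hA.le,
    Real.rpow_neg hB.le, Real.rpow_add hA, Real.rpow_add hB]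
  field_simp

end PfaffSubstitution

theorem integral_Ioo_rpow_mul_one_sub_rpow_mul_one_sub_mul_rpow {x p q : ℝ} (hx : x < 1)
    (hp : 0 < p) (hq : 0 < q) :
    ∫ t in Ioo (0 : ℝ) 1, t ^ (p - 1) * (1 - t) ^ (q - 1) * (1 - x * t) ^ (-(p + q)) =
      (1 - x) ^ (-p) * beta p q := by
  rw [integral_Ioo_eq_integral_Ioo_pfaffMap hx,
    setIntegral_congr_fun measurableSet_Ioo fun s hs => pfaffMap_integrand_eq hx hs p q,
    integral_const_mul, integral_Ioo_rpow_mul_one_sub_rpow hq hp, beta, beta,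
    mul_comm (Real.Gamma q), add_comm q]

theorem stmt_14 (a b c : ℝ) (ha : 0 < a) (hb : 0 < b) (hc : 0 < c)
    (u1 : ℝ) (hu1 : u1 ∈ Set.Ioo (0 : ℝ) 1) :
    ∫ u2 in Set.Ioo (0 : ℝ) 1,
        u1 ^ (a - 1) * u2 ^ (b - 1) * (1 - u1) ^ (b + c - 1) * (1 - u2) ^ (a + c - 1) *
          (1 - u1 * u2) ^ (-(a + b + c)) *
          (Real.Gamma (a + b + c) / (Real.Gamma a * Real.Gamma b * Real.Gamma c)) =
      u1 ^ (a - 1) * (1 - u1) ^ (c - 1) /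
        (Real.Gamma a * Real.Gamma c / Real.Gamma (a + c)) := by
  have h1u : 0 < 1 - u1 := sub_pos.2 hu1.2
  have hpow : (1 - u1) ^ (b + c - 1) * (1 - u1) ^ (-b) = (1 - u1) ^ (c - 1) := by
    rw [← Real.rpow_add h1u]
    ring_nf
  have hGa := (Real.Gamma_pos_of_pos ha).ne'
  have hGb := (Real.Gamma_pos_of_pos hb).ne'
  have hGc := (Real.Gamma_pos_of_pos hc).ne'
  have hGac := (Real.Gamma_pos_of_pos (add_pos ha hc)).ne'
  have hGabc := (Real.Gamma_pos_of_pos (add_pos (add_pos ha hb) hc)).ne'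
  calc _ = u1 ^ (a - 1) * (1 - u1) ^ (b + c - 1) *
          (Real.Gamma (a + b + c) / (Real.Gamma a * Real.Gamma b * Real.Gamma c)) *
        ∫ u2 in Ioo (0 : ℝ) 1,
          u2 ^ (b - 1) * (1 - u2) ^ (a + c - 1) * (1 - u1 * u2) ^ (-(b + (a + c))) := by
        rw [← integral_const_mul]
        congr 1 with u2
        ring_nf
    _ = _ := by
        rw [integral_Ioo_rpow_mul_one_sub_rpow_mul_one_sub_mul_rpow hu1.2 hb (add_pos ha hc), beta,
          show b + (a + c) = a + b + c by ring]
        field_simp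
        linear_combination u1 ^ (a - 1) * hpow
end

section
/- Let a, b, c > 0 and r, s ≥ 0. If (U1, U2) has the bivariate generalised beta type I density with parameters a, b, c, then E(U1^r U2^s) = (B(a+r, b+c) B(b+s, a+c) / β*(a,b,c)) · Σ_{t=0}^∞ ((a+r)_t (b+s)_t (a+b+c)_t) / ((a+b+c+r)_t (a+b+c+s)_t t!), where β*(a,b,c) = Γ(a)Γ(b)Γ(c)/Γ(a+b+c) and the series is the 3F2 hypergeometric series evaluated at 1. -/
/-!
Expand `(1 - u₁ u₂) ^ (-(a + b + c))` by the binomial series `∑ (a + b + c)_t (u₁ u₂) ^ t / t!`.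
All terms are nonnegative, and the integrand is dominated by a product of two one-dimensional
Beta integrands (split the exponent as `(b + c / 2) + (a + c / 2)` and use `1 - u₁ u₂ ≥ 1 - uᵢ`),
so the series can be integrated termwise. The `t`-th term factorises into
`B(a + r + t, b + c) B(b + s + t, a + c)`, and `Γ(x + t) = Γ(x) (x)_t` turns these into the
coefficients of the `₃F₂` series.
-/

open MeasureTheory Real Set ProbabilityTheory

theorem Real.Gamma_add_nat_eq_mul_ascPochhammer {x : ℝ} (hx : 0 < x) (n : ℕ) :
    Gamma (x + n) = Gamma x * (ascPochhammer ℝ n).eval x := by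
  induction n with
  | zero => simp
  | succ n ih =>
    rw [Nat.cast_succ, ← add_assoc, Gamma_add_one (by positivity), ih, ascPochhammer_succ_eval]
    ring

theorem ProbabilityTheory.beta_add_nat {u v : ℝ} (hu : 0 < u) (hv : 0 < v) (n : ℕ) :
    beta (u + n) v = beta u v * (ascPochhammer ℝ n).eval u / (ascPochhammer ℝ n).eval (u + v) := by
  have := ascPochhammer_pos n (u + v) (by positivity)
  have := Gamma_pos_of_pos (add_pos hu hv)
  rw [beta, beta, add_right_comm, Gamma_add_nat_eq_mul_ascPochhammer hu,
    Gamma_add_nat_eq_mul_ascPochhammer (add_pos hu hv)]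
  field_simp

theorem Real.hasSum_ascPochhammer_div_factorial_mul_pow (d : ℝ) {x : ℝ} (hx : |x| < 1) :
    HasSum (fun n : ℕ => (ascPochhammer ℝ n).eval d / n.factorial * x ^ n) ((1 - x) ^ (-d)) := by
  have hx' : x ∈ Metric.eball (0 : ℝ) 1 := by
    rwa [Metric.mem_eball, edist_zero_right, enorm_eq_nnnorm, ENNReal.coe_lt_one_iff,
      ← NNReal.coe_lt_coe, coe_nnnorm]
  have h := (one_div_one_sub_rpow_hasFPowerSeriesOnBall_zero d).hasSum hx'
  rw [FormalMultilinearSeries.ofScalars_apply_eq', zero_add] at h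
  rw [rpow_neg (by linarith [le_abs_self x]), ← one_div]
  refine h.congr_fun fun n => ?_
  have hn : (n.factorial : ℝ) ≠ 0 := by positivity
  have h_multichoose := Ring.factorial_nsmul_multichoose_eq_ascPochhammer d n
  rw [Polynomial.ascPochhammer_smeval_cast, Polynomial.ascPochhammer_smeval_eq_eval,
    Ring.multichoose_eq, nsmul_eq_mul] at h_multichoose
  rw [smul_eq_mul, ← h_multichoose]
  field_simp

theorem Real.one_sub_mul_rpow_neg_le {x y α β : ℝ} (hx : 0 ≤ x) (hx1 : x < 1) (hy : 0 ≤ y)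
    (hy1 : y < 1) (hα : 0 ≤ α) (hβ : 0 ≤ β) :
    (1 - x * y) ^ (-(α + β)) ≤ (1 - x) ^ (-α) * (1 - y) ^ (-β) := by
  have hxy : 0 < 1 - x * y := by nlinarith
  rw [neg_add, rpow_add hxy]
  gcongr ?_ * ?_
  · exact rpow_le_rpow_of_nonpos (by linarith) (by nlinarith) (by linarith)
  · exact rpow_le_rpow_of_nonpos (by linarith) (by nlinarith) (by linarith)

theorem MeasureTheory.hasSum_integral_of_nonneg {α ι : Type*} [MeasurableSpace α]
    {μ : Measure α} [Countable ι] {F : ι → α → ℝ} {f : α → ℝ}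
    (hF_meas : ∀ n, AEStronglyMeasurable (F n) μ) (hF_nonneg : ∀ n, 0 ≤ᵐ[μ] F n)
    (hf : Integrable f μ) (h_lim : ∀ᵐ a ∂μ, HasSum (fun n => F n a) (f a)) :
    HasSum (fun n => ∫ a, F n a ∂μ) (∫ a, f a ∂μ) :=
  hasSum_integral_of_dominated_convergence F hF_meas
    (fun n => (hF_nonneg n).mono fun _ ha => (Real.norm_of_nonneg ha).le)
    (h_lim.mono fun _ ha => ha.summable)
    (hf.congr (h_lim.mono fun _ ha => ha.tsum_eq.symm)) h_lim

namespace ProbabilityTheory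

noncomputable def betaIntegrand (u v x : ℝ) : ℝ := x ^ (u - 1) * (1 - x) ^ (v - 1)

variable {u v u₁ v₁ u₂ v₂ : ℝ}

lemma ofReal_betaIntegrand {x : ℝ} (hx : x ∈ Ioc 0 1) :
    (betaIntegrand u v x : ℂ) = (x : ℂ) ^ ((u : ℂ) - 1) * (1 - (x : ℂ)) ^ ((v : ℂ) - 1) := by
  rw [betaIntegrand, Complex.ofReal_mul, Complex.ofReal_cpow hx.1.le,
    Complex.ofReal_cpow (by linarith [hx.2])]
  push_cast
  rfl

theorem integrableOn_betaIntegrand (hu : 0 < u) (hv : 0 < v) :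
    IntegrableOn (betaIntegrand u v) (Ioo 0 1) := by
  have h := (Complex.betaIntegral_convergent (u := u) (v := v) (by simpa) (by simpa)).1
  rw [← integrableOn_congr_fun (fun x hx => ofReal_betaIntegrand hx) measurableSet_Ioc] at h
  have h_re := h.re
  simp only [RCLike.re_to_complex, Complex.ofReal_re] at h_re
  exact IntegrableOn.mono_set h_re Ioo_subset_Ioc_self

theorem integral_betaIntegrand (hu : 0 < u) (hv : 0 < v) :
    ∫ x in Ioo 0 1, betaIntegrand u v x = beta u v := by
  rw [beta_eq_betaIntegralReal u v hu hv, Complex.betaIntegral,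
    intervalIntegral.integral_of_le zero_le_one, ← integral_Ioc_eq_integral_Ioo,
    ← setIntegral_congr_fun measurableSet_Ioc fun x hx => ofReal_betaIntegrand hx,
    integral_complex_ofReal, Complex.ofReal_re]

@[fun_prop]
lemma measurable_betaIntegrand (u v : ℝ) : Measurable (betaIntegrand u v) := by
  unfold betaIntegrand
  fun_prop

lemma betaIntegrand_nonneg (u v : ℝ) {x : ℝ} (hx : x ∈ Ioo 0 1) : 0 ≤ betaIntegrand u v x :=
  mul_nonneg (rpow_nonneg hx.1.le _) (rpow_nonneg (by linarith [hx.2]) _)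

lemma betaIntegrand_add (u v r : ℝ) {x : ℝ} (hx : 0 < x) :
    betaIntegrand (u + r) v x = betaIntegrand u v x * x ^ r := by
  rw [betaIntegrand, betaIntegrand, add_sub_right_comm, rpow_add hx]
  ring

lemma betaIntegrand_sub (u v r : ℝ) {x : ℝ} (hx : x < 1) :
    betaIntegrand u (v - r) x = betaIntegrand u v x * (1 - x) ^ (-r) := by
  rw [betaIntegrand, betaIntegrand, sub_right_comm, sub_eq_add_neg (v - 1),
    rpow_add (by linarith)]
  ring

theorem integrableOn_betaIntegrand_prod (hu₁ : 0 < u₁) (hv₁ : 0 < v₁) (hu₂ : 0 < u₂)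
    (hv₂ : 0 < v₂) :
    IntegrableOn (fun p : ℝ × ℝ => betaIntegrand u₁ v₁ p.1 * betaIntegrand u₂ v₂ p.2)
      (Ioo 0 1 ×ˢ Ioo 0 1) := by
  rw [Measure.volume_eq_prod, IntegrableOn, ← Measure.prod_restrict]
  exact (integrableOn_betaIntegrand hu₁ hv₁).mul_prod (integrableOn_betaIntegrand hu₂ hv₂)

theorem integral_betaIntegrand_prod (hu₁ : 0 < u₁) (hv₁ : 0 < v₁) (hu₂ : 0 < u₂)
    (hv₂ : 0 < v₂) :
    ∫ p in Ioo 0 1 ×ˢ Ioo 0 1, betaIntegrand u₁ v₁ p.1 * betaIntegrand u₂ v₂ p.2 =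
      beta u₁ v₁ * beta u₂ v₂ := by
  rw [Measure.volume_eq_prod, setIntegral_prod_mul, integral_betaIntegrand hu₁ hv₁,
    integral_betaIntegrand hu₂ hv₂]

theorem integrableOn_betaIntegrand_prod_mul_one_sub_mul_rpow_neg {α β : ℝ} (hu₁ : 0 < u₁)
    (hu₂ : 0 < u₂) (hα : 0 ≤ α) (hβ : 0 ≤ β) (hαv : α < v₁) (hβv : β < v₂) :
    IntegrableOn (fun p : ℝ × ℝ => betaIntegrand u₁ v₁ p.1 * betaIntegrand u₂ v₂ p.2 *
      (1 - p.1 * p.2) ^ (-(α + β))) (Ioo 0 1 ×ˢ Ioo 0 1) := by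
  refine (integrableOn_betaIntegrand_prod hu₁ (sub_pos.2 hαv) hu₂ (sub_pos.2 hβv)).mono'
    (by fun_prop) (ae_restrict_of_forall_mem (measurableSet_Ioo.prod measurableSet_Ioo) ?_)
  rintro ⟨x, y⟩ ⟨hx, hy⟩
  have hk₁ := betaIntegrand_nonneg u₁ v₁ hx
  have hk₂ := betaIntegrand_nonneg u₂ v₂ hy
  have hxy : 0 < 1 - x * y := by nlinarith [hx.1, hx.2, hy.1, hy.2]
  rw [Real.norm_of_nonneg (by positivity), betaIntegrand_sub _ _ _ hx.2,
    betaIntegrand_sub _ _ _ hy.2, mul_mul_mul_comm]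
  exact mul_le_mul_of_nonneg_left (one_sub_mul_rpow_neg_le hx.1.le hx.2 hy.1.le hy.2 hα hβ)
    (by positivity)

theorem hasSum_integral_betaIntegrand_prod_mul_one_sub_mul_rpow_neg {d : ℝ} (hu₁ : 0 < u₁)
    (hv₁ : 0 < v₁) (hu₂ : 0 < u₂) (hv₂ : 0 < v₂) (hd : 0 < d)
    (hint : IntegrableOn (fun p : ℝ × ℝ => betaIntegrand u₁ v₁ p.1 * betaIntegrand u₂ v₂ p.2 *
      (1 - p.1 * p.2) ^ (-d)) (Ioo 0 1 ×ˢ Ioo 0 1)) :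
    HasSum (fun n : ℕ => beta u₁ v₁ * beta u₂ v₂ *
        ((ascPochhammer ℝ n).eval u₁ * (ascPochhammer ℝ n).eval u₂ * (ascPochhammer ℝ n).eval d /
          ((ascPochhammer ℝ n).eval (u₁ + v₁) * (ascPochhammer ℝ n).eval (u₂ + v₂) *
            n.factorial)))
      (∫ p in Ioo 0 1 ×ˢ Ioo 0 1, betaIntegrand u₁ v₁ p.1 * betaIntegrand u₂ v₂ p.2 *
        (1 - p.1 * p.2) ^ (-d)) := by
  have hS : MeasurableSet (Ioo (0 : ℝ) 1 ×ˢ Ioo (0 : ℝ) 1) :=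
    measurableSet_Ioo.prod measurableSet_Ioo
  have hcoeff (n : ℕ) : 0 ≤ (ascPochhammer ℝ n).eval d / n.factorial := by
    have := ascPochhammer_pos n d hd
    positivity
  have hlim := hasSum_integral_of_nonneg (μ := volume.restrict (Ioo 0 1 ×ˢ Ioo 0 1))
    (F := fun (n : ℕ) (p : ℝ × ℝ) => (ascPochhammer ℝ n).eval d / n.factorial *
      (betaIntegrand (u₁ + n) v₁ p.1 * betaIntegrand (u₂ + n) v₂ p.2))
    (fun n => by fun_prop)
    (fun n => ae_restrict_of_forall_mem hS fun p ⟨hx, hy⟩ => mul_nonneg (hcoeff n)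
      (mul_nonneg (betaIntegrand_nonneg _ _ hx) (betaIntegrand_nonneg _ _ hy)))
    hint (ae_restrict_of_forall_mem hS ?_)
  · refine hlim.congr_fun fun n => ?_
    rw [integral_const_mul, integral_betaIntegrand_prod (by positivity) hv₁ (by positivity) hv₂,
      beta_add_nat hu₁ hv₁, beta_add_nat hu₂ hv₂]
    ring
  · rintro ⟨x, y⟩ ⟨hx, hy⟩
    have hxy : |x * y| < 1 := by
      rw [abs_of_pos (mul_pos hx.1 hy.1)]
      nlinarith [hx.1, hx.2, hy.1, hy.2]
    refine ((hasSum_ascPochhammer_div_factorial_mul_pow d hxy).mul_left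
      (betaIntegrand u₁ v₁ x * betaIntegrand u₂ v₂ y)).congr_fun fun n => ?_
    simp only [betaIntegrand_add _ _ _ hx.1, betaIntegrand_add _ _ _ hy.1, rpow_natCast, mul_pow]
    ring

end ProbabilityTheory

theorem stmt_15 (a b c r s : ℝ) (ha : 0 < a) (hb : 0 < b) (hc : 0 < c)
    (hr : 0 ≤ r) (hs : 0 ≤ s) :
    ∫ p in Set.Ioo (0 : ℝ) 1 ×ˢ Set.Ioo (0 : ℝ) 1,
        p.1 ^ r * p.2 ^ s *
          (p.1 ^ (a - 1) * p.2 ^ (b - 1) * (1 - p.1) ^ (b + c - 1) * (1 - p.2) ^ (a + c - 1) *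
            (1 - p.1 * p.2) ^ (-(a + b + c)) /
            (Real.Gamma a * Real.Gamma b * Real.Gamma c / Real.Gamma (a + b + c))) =
      (Real.Gamma (a + r) * Real.Gamma (b + c) / Real.Gamma (a + r + b + c)) *
          (Real.Gamma (b + s) * Real.Gamma (a + c) / Real.Gamma (b + s + a + c)) /
          (Real.Gamma a * Real.Gamma b * Real.Gamma c / Real.Gamma (a + b + c)) *
        ∑' t : ℕ,
          ((ascPochhammer ℝ t).eval (a + r) * (ascPochhammer ℝ t).eval (b + s) *
              (ascPochhammer ℝ t).eval (a + b + c)) /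
            ((ascPochhammer ℝ t).eval (a + b + c + r) * (ascPochhammer ℝ t).eval (a + b + c + s) *
              (t.factorial : ℝ)) := by
  set βstar := Gamma a * Gamma b * Gamma c / Gamma (a + b + c)
  have hint := integrableOn_betaIntegrand_prod_mul_one_sub_mul_rpow_neg (u₁ := a + r)
    (v₁ := b + c) (u₂ := b + s) (v₂ := a + c) (α := b + c / 2) (β := a + c / 2)
    (by positivity) (by positivity) (by positivity) (by positivity) (by linarith) (by linarith)
  rw [show b + c / 2 + (a + c / 2) = a + b + c by ring] at hint
  have hsum := hasSum_integral_betaIntegrand_prod_mul_one_sub_mul_rpow_neg (by positivity)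
    (by positivity) (by positivity) (by positivity) (by positivity) hint
  rw [show a + r + (b + c) = a + b + c + r by ring,
    show b + s + (a + c) = a + b + c + s by ring] at hsum
  have hB₁ : beta (a + r) (b + c) = Gamma (a + r) * Gamma (b + c) / Gamma (a + r + b + c) := by
    rw [beta, ← add_assoc]
  have hB₂ : beta (b + s) (a + c) = Gamma (b + s) * Gamma (a + c) / Gamma (b + s + a + c) := by
    rw [beta, ← add_assoc]
  calc _ = (∫ p in Ioo 0 1 ×ˢ Ioo 0 1, betaIntegrand (a + r) (b + c) p.1 *
          betaIntegrand (b + s) (a + c) p.2 * (1 - p.1 * p.2) ^ (-(a + b + c))) / βstar := by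
        rw [← integral_div]
        refine setIntegral_congr_fun (measurableSet_Ioo.prod measurableSet_Ioo) ?_
        rintro ⟨x, y⟩ ⟨hx, hy⟩
        dsimp only
        rw [betaIntegrand_add _ _ _ hx.1, betaIntegrand_add _ _ _ hy.1, betaIntegrand,
          betaIntegrand]
        ring
    _ = _ := by
        rw [← hsum.tsum_eq, tsum_mul_left, hB₁, hB₂]
        ring
end

section
/- Let a, b, c > 0 and suppose (U1, U2) has the bivariate generalised beta type I density with parameters a, b, c. Then (V1, V2) = (1/U1, 1/U2) has joint density v1^{-a-1} v2^{-b-1} (1 - 1/v1)^{b+c-1} (1 - 1/v2)^{a+c-1} (1 - 1/(v1 v2))^{-(a+b+c)} / β*(a,b,c) on (1,∞)×(1,∞). -/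
/-!
The coordinatewise inversion `v ↦ (v₁⁻¹, v₂⁻¹)` is an involution of `ℝ²` mapping `(0,1)²` onto
`(1,∞)²`; it transports Lebesgue measure to the measure with density `v₁⁻² v₂⁻²` (a product of two
one-dimensional changes of variables). Hence `(1/U₁, 1/U₂)` has density
`v₁⁻² v₂⁻² f(1/v₁, 1/v₂)`, and `v⁻² · (1/v)^(a-1) = v^(-a-1)` turns this into the claimed density.
-/

open MeasureTheory ENNReal Set

theorem MeasurableEquiv.map_withDensity {α β : Type*} [MeasurableSpace α] [MeasurableSpace β]
    (e : α ≃ᵐ β) (μ : Measure α) (f : α → ℝ≥0∞) :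
    (μ.withDensity f).map e = (μ.map e).withDensity (f ∘ e.symm) := by
  ext s hs
  rw [Measure.map_apply e.measurable hs, withDensity_apply _ (e.measurable hs),
    withDensity_apply _ hs, e.restrict_map, lintegral_map_equiv]
  simp

theorem inv_mem_Ioo_zero_one_iff {α : Type*} [Field α] [LinearOrder α] [IsStrictOrderedRing α]
    {x : α} : x⁻¹ ∈ Ioo 0 1 ↔ 1 < x := by
  rw [mem_Ioo, ← one_lt_inv_iff₀, inv_inv]

namespace Real

theorem map_inv_volume :
    (volume : Measure ℝ).map (·⁻¹) = volume.withDensity fun x => ENNReal.ofReal (x ^ 2)⁻¹ := by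
  ext s hs
  -- inversion is a diffeomorphism away from the null set `{0}`
  have hderiv : ∀ x ∈ s \ {0}, HasDerivWithinAt (·⁻¹) (-(x ^ 2)⁻¹) (s \ {0}) x :=
    fun x hx => (hasDerivAt_inv hx.2).hasDerivWithinAt
  have key := lintegral_image_eq_lintegral_abs_deriv_mul (hs.diff (measurableSet_singleton 0))
    hderiv inv_injective.injOn 1
  simp only [Pi.one_apply, mul_one, abs_neg, abs_inv, abs_pow, sq_abs, lintegral_one,
    Measure.restrict_apply MeasurableSet.univ, univ_inter, image_inv_eq_inv, ← inv_preimage] at key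
  have hs0 : (s \ {0} : Set ℝ) =ᵐ[volume] s :=
    sdiff_null_ae_eq_self (measure_singleton (0 : ℝ))
  rw [Measure.map_apply measurable_inv hs, withDensity_apply _ hs, ← setLIntegral_congr hs0, ← key,
    preimage_sdiff, measure_sdiff_null]
  simp

theorem map_prodMap_inv_volume :
    (volume : Measure (ℝ × ℝ)).map (Prod.map (·⁻¹) (·⁻¹)) =
      volume.withDensity fun v => ENNReal.ofReal (v.1 ^ 2)⁻¹ * ENNReal.ofReal (v.2 ^ 2)⁻¹ := by
  rw [Measure.volume_eq_prod, ← Measure.map_prod_map _ _ measurable_inv measurable_inv,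
    map_inv_volume, prod_withDensity (by fun_prop) (by fun_prop)]

theorem inv_sq_mul_inv_rpow_sub_one {x : ℝ} (hx : 0 < x) (e : ℝ) :
    (x ^ 2)⁻¹ * x⁻¹ ^ (e - 1) = x ^ (-e - 1) := by
  rw [inv_rpow hx.le, ← rpow_neg hx.le, ← rpow_natCast, ← rpow_neg hx.le, ← rpow_add hx]
  norm_num
  ring_nf

end Real

noncomputable def betaStar (a b c : ℝ) : ℝ :=
  Real.Gamma a * Real.Gamma b * Real.Gamma c / Real.Gamma (a + b + c)

noncomputable def bivariateGenBetaIDensity (a b c : ℝ) (u : ℝ × ℝ) : ℝ :=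
  if u.1 ∈ Ioo (0 : ℝ) 1 ∧ u.2 ∈ Ioo (0 : ℝ) 1 then
    u.1 ^ (a - 1) * u.2 ^ (b - 1) * (1 - u.1) ^ (b + c - 1) *
      (1 - u.2) ^ (a + c - 1) * (1 - u.1 * u.2) ^ (-(a + b + c)) / betaStar a b c
  else 0

noncomputable def invBivariateGenBetaIDensity (a b c : ℝ) (v : ℝ × ℝ) : ℝ :=
  if 1 < v.1 ∧ 1 < v.2 then
    v.1 ^ (-a - 1) * v.2 ^ (-b - 1) * (1 - 1 / v.1) ^ (b + c - 1) *
      (1 - 1 / v.2) ^ (a + c - 1) * (1 - 1 / (v.1 * v.2)) ^ (-(a + b + c)) / betaStar a b c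
  else 0

section Density

variable (a b c : ℝ)

theorem measurable_bivariateGenBetaIDensity : Measurable (bivariateGenBetaIDensity a b c) :=
  Measurable.ite ((measurableSet_Ioo.preimage measurable_fst).inter
    (measurableSet_Ioo.preimage measurable_snd)) (by fun_prop) measurable_const

theorem inv_jacobian_mul_bivariateGenBetaIDensity (v : ℝ × ℝ) :
    (v.1 ^ 2)⁻¹ * (v.2 ^ 2)⁻¹ * bivariateGenBetaIDensity a b c (v.1⁻¹, v.2⁻¹) =
      invBivariateGenBetaIDensity a b c v := by
  unfold bivariateGenBetaIDensity invBivariateGenBetaIDensity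
  simp only [inv_mem_Ioo_zero_one_iff]
  split_ifs with hv
  · rw [← Real.inv_sq_mul_inv_rpow_sub_one (one_pos.trans hv.1) a,
      ← Real.inv_sq_mul_inv_rpow_sub_one (one_pos.trans hv.2) b, one_div, one_div, one_div, mul_inv]
    ring
  · rw [mul_zero]

end Density

theorem stmt_17_general (a b c : ℝ) :
    Measure.map (fun p : ℝ × ℝ => (1 / p.1, 1 / p.2))
        ((volume : Measure (ℝ × ℝ)).withDensity fun p =>
          ENNReal.ofReal
            (if p.1 ∈ Set.Ioo (0 : ℝ) 1 ∧ p.2 ∈ Set.Ioo (0 : ℝ) 1 then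
              p.1 ^ (a - 1) * p.2 ^ (b - 1) * (1 - p.1) ^ (b + c - 1) *
                (1 - p.2) ^ (a + c - 1) * (1 - p.1 * p.2) ^ (-(a + b + c)) /
                (Real.Gamma a * Real.Gamma b * Real.Gamma c / Real.Gamma (a + b + c))
            else 0)) =
      (volume : Measure (ℝ × ℝ)).withDensity fun v =>
        ENNReal.ofReal
          (if 1 < v.1 ∧ 1 < v.2 then
            v.1 ^ (-a - 1) * v.2 ^ (-b - 1) * (1 - 1 / v.1) ^ (b + c - 1) *
              (1 - 1 / v.2) ^ (a + c - 1) * (1 - 1 / (v.1 * v.2)) ^ (-(a + b + c)) /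
              (Real.Gamma a * Real.Gamma b * Real.Gamma c / Real.Gamma (a + b + c))
          else 0) := by
  change Measure.map _ (volume.withDensity fun u => ENNReal.ofReal (bivariateGenBetaIDensity a b c u))
    = volume.withDensity fun v => ENNReal.ofReal (invBivariateGenBetaIDensity a b c v)
  set e : ℝ × ℝ ≃ᵐ ℝ × ℝ := (MeasurableEquiv.inv ℝ).prodCongr (MeasurableEquiv.inv ℝ)
  have he : (fun p : ℝ × ℝ => (1 / p.1, 1 / p.2)) = e := by
    funext p
    simp only [one_div]
    rfl
  have he_eq : (e : ℝ × ℝ → ℝ × ℝ) = Prod.map (·⁻¹) (·⁻¹) := rfl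
  have hmeas := (measurable_bivariateGenBetaIDensity a b c).ennreal_ofReal.comp e.symm.measurable
  rw [he, e.map_withDensity, he_eq, Real.map_prodMap_inv_volume,
    ← withDensity_mul _ (by fun_prop) hmeas]
  refine congrArg _ (funext fun v => ?_)
  rw [← inv_jacobian_mul_bivariateGenBetaIDensity, ENNReal.ofReal_mul (by positivity),
    ENNReal.ofReal_mul (by positivity)]
  rfl

theorem stmt_17 (a b c : ℝ) (ha : 0 < a) (hb : 0 < b) (hc : 0 < c) :
    Measure.map (fun p : ℝ × ℝ => (1 / p.1, 1 / p.2))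
        ((volume : Measure (ℝ × ℝ)).withDensity fun p =>
          ENNReal.ofReal
            (if p.1 ∈ Set.Ioo (0 : ℝ) 1 ∧ p.2 ∈ Set.Ioo (0 : ℝ) 1 then
              p.1 ^ (a - 1) * p.2 ^ (b - 1) * (1 - p.1) ^ (b + c - 1) *
                (1 - p.2) ^ (a + c - 1) * (1 - p.1 * p.2) ^ (-(a + b + c)) /
                (Real.Gamma a * Real.Gamma b * Real.Gamma c / Real.Gamma (a + b + c))
            else 0)) =
      (volume : Measure (ℝ × ℝ)).withDensity fun v =>
        ENNReal.ofReal
          (if 1 < v.1 ∧ 1 < v.2 then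
            v.1 ^ (-a - 1) * v.2 ^ (-b - 1) * (1 - 1 / v.1) ^ (b + c - 1) *
              (1 - 1 / v.2) ^ (a + c - 1) * (1 - 1 / (v.1 * v.2)) ^ (-(a + b + c)) /
              (Real.Gamma a * Real.Gamma b * Real.Gamma c / Real.Gamma (a + b + c))
          else 0) :=
  stmt_17_general a b c
end
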